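/- For every ℓ ∈ [d] and every α with 1/((d+1)(s_{ℓ+1}-1)) ≤ α ≤ 1/((d+1)(s_ℓ-1)), the function f_ℓ(α) = (∏_{i=1}^{ℓ-1}(1/s_i + α)) · (1/(s_ℓ - 1) - dα) · α^{d-ℓ} satisfies f_ℓ(α) ≥ 1/y_ℓ, where y_ℓ = (s_ℓ - 1)^2 (d+1)^{d-ℓ+1} (s_{ℓ+1} - 1)^{d-ℓ}. -/

import Mathlib

/-! Each factor of `f_ℓ(α)` is bounded below on its own: the product by `∏ 1/s_i = 1/(s_ℓ - 1)`,
the middle factor by its value at the right endpoint of the interval for `α`, and `α^(d-ℓ)` by its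
value at the left endpoint. The product of these three bounds is exactly `1/y_ℓ`. -/

/-- The Sylvester sequence: `s 1 = 2` and `s i = 1 + s 1 * s 2 * ⋯ * s (i-1)` for `i ≥ 2`. -/
def sylvester : ℕ → ℕ
  | 0 => 2
  | 1 => 2
  | n + 2 => 1 + ∏ i ∈ (Finset.Icc 1 (n + 1)).attach, sylvester i.1
  decreasing_by
    exact Nat.lt_succ_of_le (Finset.mem_Icc.mp i.2).2

open Finset

theorem sylvester_succ (n : ℕ) : sylvester (n + 1) = 1 + ∏ i ∈ Icc 1 n, sylvester i := by
  cases n with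
  | zero => simp [sylvester]
  | succ n => rw [sylvester, prod_attach (Icc 1 (n + 1)) sylvester]

theorem sylvester_pos (n : ℕ) : 0 < sylvester n := by
  cases n with
  | zero => simp [sylvester]
  | succ n => rw [sylvester_succ]; omega

theorem two_le_sylvester (n : ℕ) : 2 ≤ sylvester n := by
  cases n with
  | zero => simp [sylvester]
  | succ n =>
    have : 0 < ∏ i ∈ Icc 1 n, sylvester i := prod_pos fun i _ => sylvester_pos i
    rw [sylvester_succ]; omega

theorem one_lt_sylvester_cast (n : ℕ) : (1 : ℝ) < sylvester n := by
  exact_mod_cast two_le_sylvester n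

theorem prod_one_div_sylvester (n : ℕ) :
    ∏ i ∈ Icc 1 n, (1 / (sylvester i : ℝ)) = 1 / ((sylvester (n + 1) : ℝ) - 1) := by
  rw [prod_div_distrib, prod_const_one, sylvester_succ]
  push_cast
  ring

theorem one_div_sylvester_sub_one_le_prod (n : ℕ) {α : ℝ} (hα : 0 ≤ α) :
    1 / ((sylvester (n + 1) : ℝ) - 1) ≤ ∏ i ∈ Icc 1 n, (1 / (sylvester i : ℝ) + α) := by
  rw [← prod_one_div_sylvester]
  exact prod_le_prod (fun i _ => by positivity) fun i _ => le_add_of_nonneg_right hα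

theorem one_div_add_one_mul_le_one_div_sub_mul {c d α : ℝ} (hc : 0 < c) (hd : 0 ≤ d)
    (hα : α ≤ 1 / ((d + 1) * c)) : 1 / ((d + 1) * c) ≤ 1 / c - d * α := by
  have hdα : d * α ≤ d * (1 / ((d + 1) * c)) := mul_le_mul_of_nonneg_left hα hd
  have hsplit : d * (1 / ((d + 1) * c)) = 1 / c - 1 / ((d + 1) * c) := by field_simp; ring
  linarith

theorem f_ell_ge_inv_y_ell_general (d ℓ : ℕ) (hℓ : ℓ ∈ Finset.Icc 1 d) (α : ℝ)
    (hα1 : 1 / (((d : ℝ) + 1) * ((sylvester (ℓ + 1) : ℝ) - 1)) ≤ α)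
    (hα2 : α ≤ 1 / (((d : ℝ) + 1) * ((sylvester ℓ : ℝ) - 1))) :
    (∏ i ∈ Finset.Icc 1 (ℓ - 1), (1 / (sylvester i : ℝ) + α)) *
        (1 / ((sylvester ℓ : ℝ) - 1) - (d : ℝ) * α) * α ^ (d - ℓ) ≥
      1 / (((sylvester ℓ : ℝ) - 1) ^ 2 * ((d : ℝ) + 1) ^ (d - ℓ + 1) *
        ((sylvester (ℓ + 1) : ℝ) - 1) ^ (d - ℓ)) := by
  have ha : (0 : ℝ) < sylvester ℓ - 1 := sub_pos.mpr (one_lt_sylvester_cast ℓ)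
  have hb : (0 : ℝ) < sylvester (ℓ + 1) - 1 := sub_pos.mpr (one_lt_sylvester_cast (ℓ + 1))
  have hα0 : 0 ≤ α := le_trans (by positivity) hα1
  have hprod : 1 / ((sylvester ℓ : ℝ) - 1) ≤ ∏ i ∈ Icc 1 (ℓ - 1), (1 / (sylvester i : ℝ) + α) := by
    have := one_div_sylvester_sub_one_le_prod (ℓ - 1) hα0
    rwa [Nat.sub_add_cancel (mem_Icc.mp hℓ).1] at this
  have hmid := one_div_add_one_mul_le_one_div_sub_mul ha (Nat.cast_nonneg d) hα2
  have hPQ := mul_le_mul hprod hmid (by positivity) (hprod.trans' (by positivity))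
  calc 1 / (((sylvester ℓ : ℝ) - 1) ^ 2 * ((d : ℝ) + 1) ^ (d - ℓ + 1) *
        ((sylvester (ℓ + 1) : ℝ) - 1) ^ (d - ℓ))
      = 1 / ((sylvester ℓ : ℝ) - 1) * (1 / ((d + 1) * ((sylvester ℓ : ℝ) - 1))) *
          (1 / ((d + 1) * ((sylvester (ℓ + 1) : ℝ) - 1))) ^ (d - ℓ) := by
        rw [div_pow, one_pow, mul_pow]; field_simp; ring
    _ ≤ _ := by
        gcongr ?_ * ?_ ^ _
        exact hPQ.trans' (by positivity)

theorem f_ell_ge_inv_y_ell (d ℓ : ℕ) (hd : 1 ≤ d) (hℓ : ℓ ∈ Finset.Icc 1 d) (α : ℝ)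
    (hα1 : 1 / (((d : ℝ) + 1) * ((sylvester (ℓ + 1) : ℝ) - 1)) ≤ α)
    (hα2 : α ≤ 1 / (((d : ℝ) + 1) * ((sylvester ℓ : ℝ) - 1))) :
    (∏ i ∈ Finset.Icc 1 (ℓ - 1), (1 / (sylvester i : ℝ) + α)) *
        (1 / ((sylvester ℓ : ℝ) - 1) - (d : ℝ) * α) * α ^ (d - ℓ) ≥
      1 / (((sylvester ℓ : ℝ) - 1) ^ 2 * ((d : ℝ) + 1) ^ (d - ℓ + 1) *
        ((sylvester (ℓ + 1) : ℝ) - 1) ^ (d - ℓ)) :=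
  f_ell_ge_inv_y_ell_general d ℓ hℓ α hα1 hα2
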